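/- The index of L' is at most k−2: there exists χ ∈ L'^* whose coadjoint stabilizer L'_χ has dimension at most k−2. -/

import Mathlib

/-!
Take `χ = x₁* + xₖ*`. On the frame `(x₁, xₖ₋₁, D, D')` the matrix of `(X, Y) ↦ χ⁅X, Y⁆` is
nonsingular, so `X ↦ (χ⁅X, Y⁆)_Y`, with `Y` running over the frame, maps `L'` onto `𝕜⁴`.
Its kernel contains `L'_χ` and has dimension `(k + 2) - 4`.
-/

universe u v w

open Module

/-- The coadjoint stabilizer `g_χ = {X ∈ g : χ([X,Y]) = 0 for all Y ∈ g}` of a linear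
functional `χ` on a Lie algebra `g`, as a linear subspace of `g`. -/
def coadjointStabilizer (𝕜 : Type u) [Field 𝕜] (g : Type v) [LieRing g] [LieAlgebra 𝕜 g]
    (χ : Module.Dual 𝕜 g) : Submodule 𝕜 g where
  carrier := {X | ∀ Y : g, χ ⁅X, Y⁆ = 0}
  add_mem' := by intro a b ha hb; intro Y; rw [add_lie, map_add, ha Y, hb Y, add_zero]
  zero_mem' := by intro Y; rw [zero_lie, map_zero]
  smul_mem' := by intro c a ha; intro Y; rw [smul_lie, map_smul, ha Y, smul_zero]

/-- The index of a Lie algebra: the minimum over `χ ∈ g*` of the dimension of the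
coadjoint stabilizer `g_χ`. -/
noncomputable def lieIndex (𝕜 : Type u) [Field 𝕜] (g : Type v) [LieRing g]
    [LieAlgebra 𝕜 g] : ℕ :=
  ⨅ χ : Module.Dual 𝕜 g, Module.finrank 𝕜 (coadjointStabilizer 𝕜 g χ)

/-- `b` is a basis of the Lie algebra `L'` of the paper: `Sum.inl i ↦ x_{i+1}`
(for `i : Fin k`), `Sum.inr 0 ↦ D`, `Sum.inr 1 ↦ D'`, where the `x_i` commute,
`[D, D'] = 0`, `[D, x_i] = [D', x_i] = x_i` for `i = 1, …, k-2`, `[D, x_{k-1}] = x_k`,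
`[D', x_{k-1}] = 0` and `[D, x_k] = [D', x_k] = 0`. -/
def IsL'Basis {𝕜 : Type u} [Field 𝕜] {L' : Type v} [LieRing L'] [LieAlgebra 𝕜 L']
    {k : ℕ} (b : Basis (Fin k ⊕ Fin 2) 𝕜 L') : Prop :=
  (∀ i j : Fin k, ⁅b (Sum.inl i), b (Sum.inl j)⁆ = 0) ∧
  (⁅b (Sum.inr 0), b (Sum.inr 1)⁆ = 0) ∧
  (∀ i : Fin k, (i : ℕ) < k - 2 →
      ⁅b (Sum.inr 0), b (Sum.inl i)⁆ = b (Sum.inl i) ∧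
      ⁅b (Sum.inr 1), b (Sum.inl i)⁆ = b (Sum.inl i)) ∧
  (∀ i j : Fin k, (i : ℕ) = k - 2 → (j : ℕ) = k - 1 →
      ⁅b (Sum.inr 0), b (Sum.inl i)⁆ = b (Sum.inl j) ∧
      ⁅b (Sum.inr 1), b (Sum.inl i)⁆ = 0) ∧
  (∀ i : Fin k, (i : ℕ) = k - 1 →
      ⁅b (Sum.inr 0), b (Sum.inl i)⁆ = 0 ∧ ⁅b (Sum.inr 1), b (Sum.inl i)⁆ = 0)

open Matrix

section Pairing

variable {𝕜 : Type u} [Field 𝕜] {g : Type v} [LieRing g] [LieAlgebra 𝕜 g]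

def coadjointPairing (χ : Module.Dual 𝕜 g) {ι : Type w} (w : ι → g) : g →ₗ[𝕜] ι → 𝕜 where
  toFun X j := χ ⁅X, w j⁆
  map_add' X Y := by ext; simp [add_lie]
  map_smul' c X := by ext; simp [smul_lie]

lemma coadjointStabilizer_le_ker_coadjointPairing (χ : Module.Dual 𝕜 g) {ι : Type w}
    (w : ι → g) : coadjointStabilizer 𝕜 g χ ≤ LinearMap.ker (coadjointPairing χ w) :=
  fun _ hX => funext fun j => hX (w j)

lemma coadjointPairing_sum_smul {n : ℕ} (χ : Module.Dual 𝕜 g) (v w : Fin n → g) (c : Fin n → 𝕜) :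
    coadjointPairing χ w (∑ i, c i • v i) = vecMul c (of fun i j => χ ⁅v i, w j⁆) := by
  ext j
  simp [coadjointPairing, vecMul, dotProduct]

lemma finrank_coadjointStabilizer_add_le [FiniteDimensional 𝕜 g] {n : ℕ}
    (χ : Module.Dual 𝕜 g) (v w : Fin n → g) (h : (of fun i j => χ ⁅v i, w j⁆).det ≠ 0) :
    finrank 𝕜 (coadjointStabilizer 𝕜 g χ) + n ≤ finrank 𝕜 g := by
  have hsurj : Function.Surjective (coadjointPairing χ w) := by
    intro y
    obtain ⟨c, hc⟩ := vecMul_surjective_iff_isUnit.mpr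
      ((isUnit_iff_isUnit_det _).mpr h.isUnit) y
    exact ⟨∑ i, c i • v i, by rw [coadjointPairing_sum_smul]; exact hc⟩
  have hrange : finrank 𝕜 (LinearMap.range (coadjointPairing χ w)) = n := by
    rw [LinearMap.range_eq_top.mpr hsurj, finrank_top, finrank_fin_fun]
  calc finrank 𝕜 (coadjointStabilizer 𝕜 g χ) + n
      ≤ finrank 𝕜 (LinearMap.ker (coadjointPairing χ w)) + n := by
        gcongr
        exact Submodule.finrank_mono (coadjointStabilizer_le_ker_coadjointPairing χ w)
    _ = finrank 𝕜 g := by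
        rw [← LinearMap.finrank_range_add_finrank_ker (coadjointPairing χ w), hrange, add_comm]

end Pairing

namespace IsL'Basis

variable {𝕜 : Type u} [Field 𝕜] {L' : Type v} [LieRing L'] [LieAlgebra 𝕜 L']
  {m : ℕ} {b : Basis (Fin (m + 3) ⊕ Fin 2) 𝕜 L'}

/-- `x₁* + xₖ*`, in the paper's numbering. -/
noncomputable def functional (b : Basis (Fin (m + 3) ⊕ Fin 2) 𝕜 L') : Module.Dual 𝕜 L' :=
  b.coord (.inl 0) + b.coord (.inl (Fin.last _))

/-- `(x₁, xₖ₋₁, D, D')`, in the paper's numbering. -/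
noncomputable def frame (b : Basis (Fin (m + 3) ⊕ Fin 2) 𝕜 L') : Fin 4 → L' :=
  ![b (.inl 0), b (.inl ⟨m + 1, by omega⟩), b (.inr 0), b (.inr 1)]

lemma functional_lie_frame (hb : IsL'Basis b) :
    (of fun i j => functional b ⁅frame b i, frame b j⁆) =
      !![0, 0, -1, -1; 0, 0, -1, 0; 1, 1, 0, 0; 1, 0, 0, 0] := by
  obtain ⟨hxx, hDD', hlow, hpen, -⟩ := hb
  have hD_x1 := hlow 0 (by simp)
  have hD_xpen := hpen ⟨m + 1, by omega⟩ (Fin.last _) (by simp) (by simp)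
  have hχ_x1 : functional b (b (.inl 0)) = 1 := by
    simp [functional, Fin.ext_iff]
  have hχ_xlast : functional b (b (.inl (Fin.last _))) = 1 := by
    simp [functional, Fin.ext_iff]
  have hD'_D : ⁅b (.inr 1), b (.inr 0)⁆ = 0 := by rw [← lie_skew, hDD', neg_zero]
  ext i j
  fin_cases i <;> fin_cases j <;>
    simp [frame, hxx, hDD', hD'_D, hD_x1, hD_xpen, hχ_x1, hχ_xlast,
      ← lie_skew (b (.inl _)) (b (.inr _))]

lemma det_functional_lie_frame_ne_zero (hb : IsL'Basis b) :
    (of fun i j => functional b ⁅frame b i, frame b j⁆).det ≠ 0 := by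
  rw [hb.functional_lie_frame]
  simp [det_succ_row_zero, Fin.sum_univ_succ, Fin.succAbove]

end IsL'Basis

theorem stmt3_general (k : ℕ) (hk : 3 ≤ k)
    (𝕜 : Type u) [Field 𝕜]
    (L' : Type v) [LieRing L'] [LieAlgebra 𝕜 L']
    (b : Basis (Fin k ⊕ Fin 2) 𝕜 L') (hb : IsL'Basis b) :
    (∃ χ : Module.Dual 𝕜 L',
      Module.finrank 𝕜 (coadjointStabilizer 𝕜 L' χ) ≤ k - 2) ∧
    lieIndex 𝕜 L' ≤ k - 2 := by
  obtain ⟨m, rfl⟩ := Nat.exists_eq_add_of_le' hk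
  have : FiniteDimensional 𝕜 L' := .of_basis b
  have hstab := finrank_coadjointStabilizer_add_le _ _ _ hb.det_functional_lie_frame_ne_zero
  rw [finrank_eq_card_basis b, Fintype.card_sum, Fintype.card_fin, Fintype.card_fin] at hstab
  have hχ : finrank 𝕜 (coadjointStabilizer 𝕜 L' (IsL'Basis.functional b)) ≤ m + 3 - 2 := by
    omega
  exact ⟨⟨_, hχ⟩, (ciInf_le (OrderBot.bddBelow _) _).trans hχ⟩

/-- the index of `L'` is at most `k - 2`: some coadjoint stabilizer has
dimension at most `k - 2`. -/
theorem stmt3 (p k : ℕ) (hp : p.Prime) (hk : 3 ≤ k)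
    (𝕜 : Type u) [Field 𝕜] [IsAlgClosed 𝕜] [CharP 𝕜 p]
    (L' : Type v) [LieRing L'] [LieAlgebra 𝕜 L']
    (b : Basis (Fin k ⊕ Fin 2) 𝕜 L') (hb : IsL'Basis b) :
    (∃ χ : Module.Dual 𝕜 L',
      Module.finrank 𝕜 (coadjointStabilizer 𝕜 L' χ) ≤ k - 2) ∧
    lieIndex 𝕜 L' ≤ k - 2 :=
  stmt3_general k hk 𝕜 L' b hb
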